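/- arXiv:2406.15080 — 2 statements merged into one kernel-verified Lean document; each statement's English description precedes it below -/
import Mathlib

section
/- Let F be a free group and let G, H be elements of F that do not commute. Then the diameter of the intersection of the axis of G with the axis of H in the Cayley graph of F is strictly less than 2·max([G], [H]), where [G] and [H] denote the translation lengths of G and H. -/
open FreeGroup

/-- The translation length of an element `G` of a free group: the minimal word length
of a conjugate of `G` (for `G = Y g Y⁻¹` graphically with `g` cyclically reduced, this is `|g|`). -/
noncomputable def translationLength {α : Type*} [DecidableEq α] (G : FreeGroup α) : ℕ :=
  sInf (Set.range fun w : FreeGroup α => FreeGroup.norm (w⁻¹ * G * w))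

/-- The axis of `G` in the Cayley graph of the free group: the set of vertices that are
displaced by exactly the translation length (in a tree this is the axis through `Y gⁿ`, `n ∈ ℤ`). -/
def axisSet {α : Type*} [DecidableEq α] (G : FreeGroup α) : Set (FreeGroup α) :=
  {x : FreeGroup α | FreeGroup.norm (x⁻¹ * G * x) = translationLength G}

set_option linter.unusedSectionVars false

namespace StmtAux
open FreeGroup List

variable {α : Type*} [DecidableEq α]

/-- non-cancellation relation on letters -/
def NR (a b : α × Bool) : Prop := ¬(a.1 = b.1 ∧ a.2 = !b.2)

/-- a word is reduced -/
def Rd (L : List (α × Bool)) : Prop := List.IsChain NR L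

theorem rd_reduce (L : List (α × Bool)) : Rd (reduce L) := by
  induction L with
  | nil => simp [Rd]
  | cons hd tl ih =>
    rw [reduce.cons]
    revert ih
    cases h : reduce tl with
    | nil => intro _; simp [Rd]
    | cons hd2 tl2 =>
      intro ih
      dsimp only
      split_ifs with hc
      · exact ih.tail
      · exact List.isChain_cons_cons.2 ⟨hc, ih⟩

theorem reduce_eq_self {L : List (α × Bool)} (h : Rd L) : reduce L = L := by
  induction L with
  | nil => rfl
  | cons hd tl ih =>
    rw [reduce.cons, ih h.tail]
    cases tl with
    | nil => rfl
    | cons hd2 tl2 =>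
      dsimp only
      rw [if_neg (List.isChain_cons_cons.1 h).1]

theorem rd_toWord (x : FreeGroup α) : Rd x.toWord := by
  rw [← reduce_toWord x]; exact rd_reduce _

theorem norm_mk_eq {L : List (α × Bool)} (h : Rd L) : norm (mk L) = L.length := by
  show (toWord (mk L)).length = _
  rw [toWord_mk, reduce_eq_self h]

theorem norm_mk_reduce (L : List (α × Bool)) : norm (mk L) = (reduce L).length := rfl

theorem invRev_append' (L₁ L₂ : List (α × Bool)) :
    invRev (L₁ ++ L₂) = invRev L₂ ++ invRev L₁ := by simp [invRev]

theorem invRev_concat (c : List (α × Bool)) (x : α × Bool) :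
    invRev (c ++ [x]) = (x.1, !x.2) :: invRev c := by simp [invRev]

theorem invRev_cons (x : α × Bool) (c : List (α × Bool)) :
    invRev (x :: c) = invRev c ++ [(x.1, !x.2)] := by simp [invRev]

theorem invRev_singleton (x : α × Bool) : invRev [x] = [(x.1, !x.2)] := by simp [invRev]

theorem rd_invRev {L : List (α × Bool)} (h : Rd L) : Rd (invRev L) := by
  rw [Rd, invRev, List.isChain_reverse, List.isChain_map]
  refine h.imp ?_
  rintro a b hab ⟨h1, h2⟩
  exact hab ⟨h1.symm, by simp at h2; simp [h2]⟩

/-- cancellation lemma for concatenation of two reduced words -/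
theorem cancel (L₁ L₂ : List (α × Bool)) (h₁ : Rd L₁) (h₂ : Rd L₂) :
    ∃ p c s, L₁ = p ++ c ∧ L₂ = invRev c ++ s ∧ reduce (L₁ ++ L₂) = p ++ s := by
  induction L₁ using List.reverseRecOn generalizing L₂ with
  | nil =>
    exact ⟨[], [], L₂, rfl, rfl, by simpa using reduce_eq_self h₂⟩
  | append_singleton M x ih =>
    cases L₂ with
    | nil =>
      refine ⟨M ++ [x], [], [], by simp, by simp [invRev], ?_⟩
      simpa using reduce_eq_self h₁
    | cons y T =>
      by_cases hxy : y = (x.1, !x.2)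
      · have hstep : Red.Step ((M ++ [x]) ++ y :: T) (M ++ T) := by
          subst hxy
          have : (M ++ [x]) ++ (x.1, !x.2) :: T = M ++ (x.1, x.2) :: (x.1, !x.2) :: T := by
            simp
          rw [this]
          exact Red.Step.not
        obtain ⟨p, c, s, hM, hT, hred⟩ :=
          ih T (h₁.prefix ⟨[x], rfl⟩) h₂.tail
        refine ⟨p, c ++ [x], s, by rw [hM, List.append_assoc], ?_, ?_⟩
        · rw [invRev_concat, ← hxy]
          simp [hT]
        · rw [reduce.Step.eq hstep, hred]
      · have hrd : Rd ((M ++ [x]) ++ y :: T) := by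
          rw [Rd, List.isChain_append]
          refine ⟨h₁, h₂, ?_⟩
          intro a ha b hb
          simp at ha hb
          subst ha
          subst hb
          intro ⟨e1, e2⟩
          exact hxy (by ext : 1 <;> simp [← e1, e2])
        exact ⟨M ++ [x], [], y :: T, by simp, by simp [invRev], reduce_eq_self hrd⟩

/-- n-fold concatenation power of a word -/
def pw (g : List (α × Bool)) : ℕ → List (α × Bool)
  | 0 => []
  | n + 1 => g ++ pw g n

theorem pw_succ' (g : List (α × Bool)) (n : ℕ) : pw g (n + 1) = pw g n ++ g := by
  induction n with
  | zero => simp [pw]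
  | succ n ih =>
    show g ++ pw g (n + 1) = pw g (n + 1) ++ g
    conv_lhs => rw [ih]
    show g ++ (pw g n ++ g) = (g ++ pw g n) ++ g
    rw [List.append_assoc]

theorem length_pw (g : List (α × Bool)) (n : ℕ) : (pw g n).length = n * g.length := by
  induction n with
  | zero => simp [pw]
  | succ n ih => simp [pw, ih]; ring

theorem prefix_pw_of_prefix_append {g : List (α × Bool)} (hg : g ≠ []) :
    ∀ N w, w.length ≤ N → w <+: g ++ w → ∃ n, w <+: pw g n := by
  intro N
  induction N with
  | zero =>
    intro w hw _
    exact ⟨0, by simp at hw; simp [hw, pw]⟩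
  | succ N ihN =>
    intro w hw h
    by_cases hle : w.length ≤ g.length
    · have : w <+: g := List.prefix_of_prefix_length_le h (List.prefix_append g w) hle
      exact ⟨1, by simpa [pw] using this.trans (List.prefix_append g (pw g 0))⟩
    · push_neg at hle
      have hgw : g <+: w :=
        List.prefix_of_prefix_length_le (List.prefix_append g w) h (le_of_lt hle)
      obtain ⟨w', rfl⟩ := hgw
      have hw' : w' <+: g ++ w' := by
        obtain ⟨t, ht⟩ := h
        rw [List.append_assoc] at ht
        exact ⟨t, List.append_cancel_left ht⟩
      have hlen : w'.length ≤ N := by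
        have h1 : 1 ≤ g.length := by
          cases g with | nil => exact absurd rfl hg | cons a l => simp
        have := hw
        simp [List.length_append] at this ⊢
        omega
      obtain ⟨n, hn⟩ := ihN w' hlen hw'
      exact ⟨n + 1, by
        obtain ⟨t, ht⟩ := hn
        exact ⟨t, by rw [show pw g (n+1) = g ++ pw g n from rfl, ← ht, List.append_assoc]⟩⟩

theorem getElem_list_eq {β : Type*} {l l' : List β} (h : l = l') (i : ℕ) (hi : i < l.length) :
    l[i]'hi = l'[i]'(h ▸ hi) := by subst h; rfl

theorem getElem_idx_eq {β : Type*} (w : List β) {i j : ℕ} (hij : i = j) (hi : i < w.length) :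
    w[i]'hi = w[j]'(hij ▸ hi) := by subst hij; rfl

theorem period_of_prefix_pw {g w : List (α × Bool)} {n : ℕ} (hw : w <+: pw g n)
    (i : ℕ) (hi : i + g.length < w.length) :
    w[i + g.length]'hi = w[i]'(by omega) := by
  have hlen : w.length ≤ (pw g n).length := hw.length_le
  obtain ⟨n', rfl⟩ : ∃ n', n = n' + 1 := by
    cases n with
    | zero => simp only [pw, List.length_nil, Nat.le_zero] at hlen; omega
    | succ k => exact ⟨k, rfl⟩
  have e3 : (pw g (n' + 1)).length = (pw g n').length + g.length := by
    rw [pw_succ']; simp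
  have h1 : w[i + g.length]'hi = (pw g (n' + 1))[i + g.length]'(by omega) := hw.getElem hi
  have h2 : w[i]'(by omega) = (pw g (n' + 1))[i]'(by omega) := hw.getElem (by omega)
  have hA : (pw g (n' + 1))[i + g.length]'(by omega) = (pw g n')[i]'(by omega) := by
    rw [List.getElem_of_eq (show pw g (n' + 1) = g ++ pw g n' from rfl)]
    rw [List.getElem_append_right (by omega)]
    exact getElem_idx_eq _ (by omega) _
  have hB : (pw g (n' + 1))[i]'(by omega) = (pw g n')[i]'(by omega) :=
    (getElem_list_eq (pw_succ' g n') i (by omega)).trans (List.getElem_append_left (by omega))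
  exact h1.trans (hA.trans (hB.symm.trans h2.symm))

theorem period' {g w : List (α × Bool)} {n : ℕ} (hw : w <+: pw g n) {i j : ℕ}
    (hi : i < w.length) (hj : j < w.length) (hij : i = j + g.length) :
    w[i]'hi = w[j]'hj := by
  subst hij
  exact period_of_prefix_pw hw j hi

theorem comm_of_common_prefix {g h w : List (α × Bool)} {n m : ℕ}
    (hlen : g.length + h.length ≤ w.length)
    (hwg : w <+: pw g n) (hwh : w <+: pw h m) : g ++ h = h ++ g := by
  have hwle : w.length ≤ (pw g n).length := hwg.length_le
  have hwlh : w.length ≤ (pw h m).length := hwh.length_le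
  have hgw : ∀ i (hi : i < g.length), g[i] = w[i]'(by omega) := by
    intro i hi
    obtain ⟨n', rfl⟩ : ∃ n', n = n' + 1 := by
      cases n with
      | zero => simp only [pw, List.length_nil, Nat.le_zero] at hwle; omega
      | succ k => exact ⟨k, rfl⟩
    have e3 : (pw g (n' + 1)).length = (pw g n').length + g.length := by rw [pw_succ']; simp
    have h1 : w[i]'(by omega) = (pw g (n' + 1))[i]'(by omega) := hwg.getElem (by omega)
    have h2 : (pw g (n' + 1))[i]'(by omega) = g[i]'hi := by
      rw [List.getElem_of_eq (show pw g (n' + 1) = g ++ pw g n' from rfl)]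
      rw [List.getElem_append_left]
    rw [h1, h2]
  have hhw : ∀ i (hi : i < h.length), h[i] = w[i]'(by omega) := by
    intro i hi
    obtain ⟨m', rfl⟩ : ∃ m', m = m' + 1 := by
      cases m with
      | zero => simp only [pw, List.length_nil, Nat.le_zero] at hwlh; omega
      | succ k => exact ⟨k, rfl⟩
    have e3 : (pw h (m' + 1)).length = (pw h m').length + h.length := by rw [pw_succ']; simp
    have h1 : w[i]'(by omega) = (pw h (m' + 1))[i]'(by omega) := hwh.getElem (by omega)
    have h2 : (pw h (m' + 1))[i]'(by omega) = h[i]'hi := by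
      rw [List.getElem_of_eq (show pw h (m' + 1) = h ++ pw h m' from rfl)]
      rw [List.getElem_append_left]
    rw [h1, h2]
  apply List.ext_getElem (by simp [Nat.add_comm])
  intro i h1 h2
  simp only [List.length_append] at h1 h2
  by_cases hip : i < g.length <;> by_cases hiq : i < h.length
  · rw [List.getElem_append_left hip, List.getElem_append_left hiq, hgw i hip, hhw i hiq]
  · rw [List.getElem_append_left hip, List.getElem_append_right (by omega)]
    rw [hgw i hip, hgw (i - h.length) (by omega)]
    exact period' hwh (by omega) (by omega) (by omega)
  · rw [List.getElem_append_right (by omega), List.getElem_append_left hiq]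
    rw [hhw i hiq, hhw (i - g.length) (by omega)]
    exact (period' hwg (by omega) (by omega) (by omega)).symm
  · rw [List.getElem_append_right (by omega), List.getElem_append_right (by omega)]
    rw [hhw (i - g.length) (by omega), hgw (i - h.length) (by omega)]
    exact ((period' hwg (i := i) (j := i - g.length) (by omega) (by omega) (by omega)).symm).trans
      (period' hwh (i := i) (j := i - h.length) (by omega) (by omega) (by omega))

theorem axis_prefix {g : List (α × Bool)} (hg : Rd g) (hgg : Rd (g ++ g)) (hgne : g ≠ []) :
    ∀ N (w : List (α × Bool)), w.length ≤ N → Rd w →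
      norm ((mk w)⁻¹ * mk g * mk w) = g.length →
      ∃ n, w <+: pw g n ∨ w <+: pw (invRev g) n := by
  intro N
  induction N with
  | zero =>
    intro w hwN hw _
    have hwnil : w = [] := List.eq_nil_of_length_eq_zero (by omega)
    exact ⟨0, Or.inl (by simp [hwnil, pw])⟩
  | succ N ihN =>
    intro w hwN hw hnorm
    obtain ⟨p, c, s, hgpc, hwcs, hred⟩ := cancel g w hg hw
    by_cases hc : c = []
    · -- no cancellation in g ++ w
      subst hc
      rw [List.append_nil] at hgpc
      rw [invRev_empty, List.nil_append] at hwcs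
      subst hgpc
      subst hwcs
      obtain ⟨p', c', s', h1', h2', h3'⟩ :=
        cancel (invRev w) (g ++ w) (rd_invRev hw) (by rw [← hred]; exact rd_reduce _)
      have key : (mk w)⁻¹ * mk g * mk w = mk (invRev w ++ (g ++ w)) := by
        rw [← mul_mk, ← mul_mk, ← inv_mk, mul_assoc]
      rw [key, norm_mk_reduce, h3'] at hnorm
      have l1 : w.length = p'.length + c'.length := by
        have := congrArg List.length h1'
        simpa [invRev_length] using this
      have l2 : g.length + w.length = c'.length + s'.length := by
        have := congrArg List.length h2'
        simpa [invRev_length] using this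
      have l3 : p'.length + s'.length = g.length := by simpa using hnorm
      have hp' : p' = [] := List.eq_nil_of_length_eq_zero (by omega)
      subst hp'
      rw [List.nil_append] at h1'
      subst h1'
      rw [invRev_invRev] at h2'
      have hpref : w <+: g ++ w := ⟨s', h2'.symm⟩
      obtain ⟨n, hn⟩ := prefix_pw_of_prefix_append hgne w.length w le_rfl hpref
      exact ⟨n, Or.inl hn⟩
    · by_cases hs : s = []
      · -- w is a prefix of (invRev g)
        subst hs
        rw [List.append_nil] at hwcs
        have hpref : w <+: invRev g := ⟨invRev p, by rw [hwcs, ← invRev_append', ← hgpc]⟩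
        exact ⟨1, Or.inr (by simpa [pw] using hpref)⟩
      · by_cases hp : p = []
        · -- w = invRev g ++ s ; recurse on s
          subst hp
          rw [List.nil_append] at hgpc
          subst hgpc
          have hglen : 1 ≤ g.length := by
            cases g with
            | nil => exact absurd rfl hgne
            | cons a t => simp
          have hsN : s.length ≤ N := by
            have := congrArg List.length hwcs
            simp [invRev_length] at this
            omega
          have hrs : Rd s := hw.suffix ⟨invRev g, hwcs.symm⟩
          have hmw : mk w = (mk g)⁻¹ * mk s := by
            rw [hwcs, ← mul_mk, ← inv_mk]
          have hnorm' : norm ((mk s)⁻¹ * mk g * mk s) = g.length := by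
            have : (mk s)⁻¹ * mk g * mk s = (mk w)⁻¹ * mk g * mk w := by
              rw [hmw]; group
            rw [this]; exact hnorm
          obtain ⟨n, hcase⟩ := ihN s hsN hrs hnorm'
          rcases hcase with hpos | hneg
          · -- contradiction with reducedness of w at the junction
            exfalso
            obtain ⟨s0, s', rfl⟩ := List.exists_cons_of_ne_nil hs
            obtain ⟨a, g', rfl⟩ := List.exists_cons_of_ne_nil hgne
            obtain ⟨n'', rfl⟩ : ∃ n'', n = n'' + 1 := by
              cases n with
              | zero =>
                exfalso
                have := List.prefix_nil.1 hpos
                simp at this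
              | succ k => exact ⟨k, rfl⟩
            have hs0 : s0 = a := by
              have : s0 :: s' <+: a :: (g' ++ pw (a :: g') n'') := hpos
              exact (List.cons_prefix_cons.1 this).1
            rw [hwcs, Rd, List.isChain_append] at hw
            have hj := hw.2.2 (a.1, !a.2) (by rw [invRev_cons, List.getLast?_concat]; rfl) s0 rfl
            exact hj ⟨by rw [hs0], by rw [hs0]⟩
          · obtain ⟨t, ht⟩ := hneg
            refine ⟨n + 1, Or.inr ⟨t, ?_⟩⟩
            show w ++ t = invRev g ++ pw (invRev g) n
            rw [hwcs, List.append_assoc, ht]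
        · -- middle case: everything nonempty, contradiction
          exfalso
          obtain ⟨c0, c', rfl⟩ := List.exists_cons_of_ne_nil hc
          obtain ⟨p0, p', rfl⟩ := List.exists_cons_of_ne_nil hp
          obtain ⟨s0, s', rfl⟩ := List.exists_cons_of_ne_nil hs
          set c := c0 :: c' with hcdef
          set p := p0 :: p' with hpdef
          set s := s0 :: s' with hsdef
          have e1 : mk w = (mk c)⁻¹ * mk s := by rw [hwcs, ← mul_mk, ← inv_mk]
          have e2 : mk g = mk p * mk c := by rw [hgpc, ← mul_mk]
          have e3 : mk (invRev s ++ (c ++ (p ++ s))) = (mk s)⁻¹ * (mk c * (mk p * mk s)) := by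
            rw [← mul_mk, ← mul_mk, ← mul_mk, ← inv_mk]
          have hkey : (mk w)⁻¹ * mk g * mk w = mk (invRev s ++ (c ++ (p ++ s))) := by
            rw [e1, e2, e3]; group
          have RdA : Rd (invRev s ++ c) := by
            have : invRev w = invRev s ++ c := by rw [hwcs, invRev_append', invRev_invRev]
            rw [← this]; exact rd_invRev hw
          have RdB : Rd (c ++ p) :=
            hgg.infix ⟨p, c, by rw [hgpc]; simp [List.append_assoc]⟩
          have RdC : Rd (p ++ s) := by rw [← hred]; exact rd_reduce _
          have hB : Rd (invRev s ++ (c ++ (p ++ s))) := by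
            rw [Rd, List.isChain_append]
            refine ⟨RdA.prefix ⟨c, rfl⟩, ?_, ?_⟩
            · rw [List.isChain_append]
              refine ⟨RdB.prefix ⟨p, rfl⟩, RdC, ?_⟩
              intro x hx y hy
              have := (List.isChain_append.1 RdB).2.2 x hx y (by simpa using hy)
              exact this
            · intro x hx y hy
              have := (List.isChain_append.1 RdA).2.2 x hx y (by simpa using hy)
              exact this
          have hlen1 : (invRev s ++ (c ++ (p ++ s))).length
              = s.length + (c.length + (p.length + s.length)) := by
            simp [invRev_length]
          rw [hkey, norm_mk_reduce, reduce_eq_self hB, hlen1] at hnorm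
          have hglen : g.length = p.length + c.length := by rw [hgpc]; simp
          have hs1 : 1 ≤ s.length := by rw [hsdef]; simp
          omega

theorem tl_conj (x G : FreeGroup α) : translationLength (x⁻¹ * G * x) = translationLength G := by
  unfold translationLength
  congr 1
  ext n
  simp only [Set.mem_range]
  constructor
  · rintro ⟨w, rfl⟩
    exact ⟨x * w, by congr 1; group⟩
  · rintro ⟨w, rfl⟩
    exact ⟨x⁻¹ * w, by congr 1; group⟩

theorem rd_sq_of_min (G : FreeGroup α) (hmin : norm G = translationLength G) :
    Rd (G.toWord ++ G.toWord) := by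
  have hrd : Rd G.toWord := rd_toWord G
  by_contra hbad
  have hC : ¬ ∀ x ∈ G.toWord.getLast?, ∀ y ∈ G.toWord.head?, NR x y := fun hC =>
    hbad (List.isChain_append.2 ⟨hrd, hrd, hC⟩)
  push_neg at hC
  obtain ⟨x, hx, y, hy, hxy⟩ := hC
  have hxy' : x.1 = y.1 ∧ x.2 = !y.2 := not_not.1 hxy
  cases hl : G.toWord with
  | nil => rw [hl] at hx; simp at hx
  | cons hd t =>
    rw [hl] at hx hy
    have hyhd : y = hd := by simp at hy; exact hy.symm
    rcases List.eq_nil_or_concat t with ht | ⟨t2, z, ht⟩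
    · subst ht
      have hxhd : x = hd := by simp at hx; exact hx.symm
      rw [hyhd, hxhd] at hxy'
      simp at hxy'
    · subst ht
      simp only [List.concat_eq_append] at hx hy hl
      have hxz : x = z := by
        rw [show hd :: (t2 ++ [z]) = (hd :: t2) ++ [z] from rfl, List.getLast?_concat] at hx
        simp at hx; exact hx.symm
      have hz : z = (hd.1, !hd.2) := by
        rw [hxz, hyhd] at hxy'
        ext
        · exact hxy'.1
        · exact hxy'.2
      have hG : G = mk [hd] * mk t2 * mk [z] := by
        conv_lhs => rw [← mk_toWord (x := G)]
        rw [hl, mul_mk, mul_mk]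
        congr 1
      have hin : mk [z] = (mk [hd])⁻¹ := by rw [inv_mk, invRev_singleton, hz]
      have hconj : (mk [hd])⁻¹ * G * mk [hd] = mk t2 := by
        rw [hG, hin]; group
      have hle : translationLength G ≤ norm (mk t2) := by
        rw [← hconj]
        exact Nat.sInf_le ⟨mk [hd], rfl⟩
      have hnt2 : norm (mk t2) ≤ t2.length := norm_mk_le
      have hnormG : norm G = t2.length + 2 := by
        show G.toWord.length = _
        rw [hl]; simp
      omega

theorem core (G H : FreeGroup α) (hcomm : ¬ Commute G H)
    (h1G : norm G = translationLength G) (h1H : norm H = translationLength H)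
    (y : FreeGroup α) (hyG : norm (y⁻¹ * G * y) = translationLength G)
    (hyH : norm (y⁻¹ * H * y) = translationLength H) :
    norm y < 2 * max (translationLength G) (translationLength H) := by
  have hG1 : G ≠ 1 := fun e => hcomm (e ▸ Commute.one_left H)
  have hH1 : H ≠ 1 := fun e => hcomm (e ▸ Commute.one_right G)
  by_contra hge
  push_neg at hge
  have hmkg : mk G.toWord = G := mk_toWord
  have hmkh : mk H.toWord = H := mk_toWord
  have hgne : G.toWord ≠ [] := fun e => hG1 (by rw [← hmkg, e]; rfl)
  have hhne : H.toWord ≠ [] := fun e => hH1 (by rw [← hmkh, e]; rfl)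
  have hnG : norm G = G.toWord.length := rfl
  have hnH : norm H = H.toWord.length := rfl
  have hny : norm y = y.toWord.length := rfl
  obtain ⟨n, hy1⟩ := axis_prefix (rd_toWord G) (rd_sq_of_min G h1G) hgne
    y.toWord.length y.toWord le_rfl (rd_toWord y)
    (by rw [mk_toWord, hmkg, hyG, ← h1G]; rfl)
  obtain ⟨m, hy2⟩ := axis_prefix (rd_toWord H) (rd_sq_of_min H h1H) hhne
    y.toWord.length y.toWord le_rfl (rd_toWord y)
    (by rw [mk_toWord, hmkh, hyH, ← h1H]; rfl)
  have hmax1 : translationLength G ≤ max (translationLength G) (translationLength H) :=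
    le_max_left _ _
  have hmax2 : translationLength H ≤ max (translationLength G) (translationLength H) :=
    le_max_right _ _
  have hyl : G.toWord.length + H.toWord.length ≤ y.toWord.length := by
    rw [← hnG, ← hnH, h1G, h1H, ← hny]
    omega
  have hinvg : (invRev G.toWord).length = G.toWord.length := invRev_length
  have hinvh : (invRev H.toWord).length = H.toWord.length := invRev_length
  have hmkinvg : mk (invRev G.toWord) = G⁻¹ := by rw [← inv_mk, hmkg]
  have hmkinvh : mk (invRev H.toWord) = H⁻¹ := by rw [← inv_mk, hmkh]
  apply hcomm
  rcases hy1 with h1 | h1 <;> rcases hy2 with h2 | h2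
  · have e := comm_of_common_prefix hyl h1 h2
    have : mk G.toWord * mk H.toWord = mk H.toWord * mk G.toWord := by rw [mul_mk, mul_mk, e]
    rwa [hmkg, hmkh] at this
  · have e := comm_of_common_prefix (by omega) h1 h2
    have : mk G.toWord * mk (invRev H.toWord) = mk (invRev H.toWord) * mk G.toWord := by
      rw [mul_mk, mul_mk, e]
    rw [hmkg, hmkinvh] at this
    have h2' : Commute G H⁻¹ := this
    have := h2'.inv_right
    rwa [inv_inv] at this
  · have e := comm_of_common_prefix (by omega) h1 h2
    have : mk (invRev G.toWord) * mk H.toWord = mk H.toWord * mk (invRev G.toWord) := by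
      rw [mul_mk, mul_mk, e]
    rw [hmkinvg, hmkh] at this
    have h2' : Commute G⁻¹ H := this
    have := h2'.inv_left
    rwa [inv_inv] at this
  · have e := comm_of_common_prefix (by omega) h1 h2
    have : mk (invRev G.toWord) * mk (invRev H.toWord)
        = mk (invRev H.toWord) * mk (invRev G.toWord) := by
      rw [mul_mk, mul_mk, e]
    rw [hmkinvg, hmkinvh] at this
    have h2' : Commute G⁻¹ H⁻¹ := this
    have := h2'.inv_left.inv_right
    rwa [inv_inv, inv_inv] at this

end StmtAux

/-- If `G, H` are elements of a free group that do not commute, then the diameter of the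
intersection of the axis of `G` with the axis of `H` in the Cayley graph is strictly less
than `2 · max([G], [H])`, where `[·]` is the translation length. -/
theorem stmt_1 {α : Type*} [DecidableEq α] (G H : FreeGroup α) (h : ¬ Commute G H) :
    ∀ x ∈ axisSet G ∩ axisSet H, ∀ y ∈ axisSet G ∩ axisSet H,
      FreeGroup.norm (x⁻¹ * y) < 2 * max (translationLength G) (translationLength H) := by
  rintro x ⟨hxG, hxH⟩ y ⟨hyG, hyH⟩
  have hxG' : FreeGroup.norm (x⁻¹ * G * x) = translationLength G := hxG
  have hxH' : FreeGroup.norm (x⁻¹ * H * x) = translationLength H := hxH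
  have hyG' : FreeGroup.norm (y⁻¹ * G * y) = translationLength G := hyG
  have hyH' : FreeGroup.norm (y⁻¹ * H * y) = translationLength H := hyH
  have hnc : ¬ Commute (x⁻¹ * G * x) (x⁻¹ * H * x) := by
    intro hc
    apply h
    rw [Commute, SemiconjBy] at hc ⊢
    have e1 : G * H = x * ((x⁻¹ * G * x) * (x⁻¹ * H * x)) * x⁻¹ := by group
    have e2 : H * G = x * ((x⁻¹ * H * x) * (x⁻¹ * G * x)) * x⁻¹ := by group
    rw [e1, hc, ← e2]
  have key := StmtAux.core (x⁻¹ * G * x) (x⁻¹ * H * x) hnc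
    (by rw [StmtAux.tl_conj]; exact hxG')
    (by rw [StmtAux.tl_conj]; exact hxH')
    (x⁻¹ * y)
    (by rw [StmtAux.tl_conj]
        rw [show (x⁻¹ * y)⁻¹ * (x⁻¹ * G * x) * (x⁻¹ * y) = y⁻¹ * G * y by group]
        exact hyG')
    (by rw [StmtAux.tl_conj]
        rw [show (x⁻¹ * y)⁻¹ * (x⁻¹ * H * x) * (x⁻¹ * y) = y⁻¹ * H * y by group]
        exact hyH')
  rwa [StmtAux.tl_conj, StmtAux.tl_conj] at key
end

section
/- Let Γ = ⟨a : R⟩ be a group presentation in which every relator is a cyclically reduced word of length l, and suppose every reduced Van Kampen diagram D over Γ satisfies |∂D| ≥ (1 − 2d − ε)·l·|D| for some fixed d < 1/2 and ε = 1/2 − d. Then any reduced Van Kampen diagram whose boundary word has length at most 2·C₀·l, where C₀ = (1/2 − d)/4, has no cells; consequently every relation of Γ of length at most 2·C₀·l holds already in the free group on a, i.e., the ball of radius C₀·l in the Cayley graph of Γ is a tree. -/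
/-- The minimal number of cells of a Van Kampen diagram for `w` over the presentation with
relator set `R`: the least `m` such that `w` is a product of `m` conjugates of relators of
`R` or their inverses. -/
noncomputable def minVKCells {k : ℕ} (R : Set (FreeGroup (Fin k))) (w : FreeGroup (Fin k)) : ℕ :=
  sInf {m : ℕ | ∃ cs : List (FreeGroup (Fin k)), cs.length = m ∧
    (∀ c ∈ cs, ∃ r ∈ R, ∃ g : FreeGroup (Fin k), c = g * r * g⁻¹ ∨ c = g * r⁻¹ * g⁻¹) ∧
    cs.prod = w}

lemma minVKCells_set_nonempty {k : ℕ} (R : Set (FreeGroup (Fin k))) (w : FreeGroup (Fin k))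
    (hw : w ∈ Subgroup.normalClosure R) :
    ∃ cs : List (FreeGroup (Fin k)),
      (∀ c ∈ cs, ∃ r ∈ R, ∃ g : FreeGroup (Fin k), c = g * r * g⁻¹ ∨ c = g * r⁻¹ * g⁻¹) ∧
      cs.prod = w := by
  refine Subgroup.closure_induction (fun x hx => ?_) ?_
    (fun x y _ _ ihx ihy => ?_) (fun x _ ihx => ?_) hw
  · obtain ⟨r, hr, hc⟩ := Group.mem_conjugatesOfSet_iff.1 hx
    obtain ⟨g, hg⟩ := hc
    refine ⟨[x], ?_, by simp⟩
    intro c hc'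
    simp only [List.mem_singleton] at hc'
    subst hc'
    exact ⟨r, hr, g, Or.inl (eq_mul_inv_iff_mul_eq.2 hg.eq.symm)⟩
  · exact ⟨[], by simp, by simp⟩
  · obtain ⟨cs, h1, h2⟩ := ihx
    obtain ⟨ds, h3, h4⟩ := ihy
    refine ⟨cs ++ ds, ?_, by simp [h2, h4]⟩
    intro c hc
    rcases List.mem_append.1 hc with h | h
    · exact h1 c h
    · exact h3 c h
  · obtain ⟨cs, h1, h2⟩ := ihx
    refine ⟨(cs.map (·⁻¹)).reverse, ?_, ?_⟩
    · intro c hc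
      simp only [List.mem_reverse, List.mem_map] at hc
      obtain ⟨a, ha, rfl⟩ := hc
      obtain ⟨r, hr, g, hg | hg⟩ := h1 a ha
      · exact ⟨r, hr, g, Or.inr (by rw [hg]; group)⟩
      · exact ⟨r, hr, g, Or.inl (by rw [hg]; group)⟩
    · rw [← h2, List.prod_reverse_noncomm]
      simp

/-- Let `Γ = ⟨a : R⟩` be a presentation whose relators are cyclically reduced words of
length `l`, such that every reduced Van Kampen diagram `D` over `Γ` satisfies
`|∂D| ≥ (1 − 2d − ε)·l·|D|` with `d < 1/2`, `ε = 1/2 − d` (stated via the minimal number of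
cells needed to fill a relation `w`).  Then every relation of `Γ` of length at most
`2·C₀·l`, with `C₀ = (1/2 − d)/4`, holds already in the free group; i.e. the ball of radius
`C₀·l` in the Cayley graph of `Γ` is a tree. -/
theorem stmt_12 (k l : ℕ) (hk : 2 ≤ k) (hl : 0 < l) (d : ℝ) (hd : d < 1 / 2)
    (R : Set (FreeGroup (Fin k)))
    (hR : ∀ r ∈ R, FreeGroup.norm r = l ∧
      ∀ x : FreeGroup (Fin k), FreeGroup.norm r ≤ FreeGroup.norm (x⁻¹ * r * x))
    (hiso : ∀ w ∈ Subgroup.normalClosure R, w ≠ 1 →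
      (1 - 2 * d - (1 / 2 - d)) * l * (minVKCells R w : ℝ) ≤ FreeGroup.norm w) :
    ∀ w ∈ Subgroup.normalClosure R,
      (FreeGroup.norm w : ℝ) ≤ 2 * ((1 / 2 - d) / 4) * l → w = 1 := by
  intro w hw hlen
  by_contra hne
  have hbound := hiso w hw hne
  have hc : (1 : ℝ) - 2 * d - (1 / 2 - d) = 1 / 2 - d := by ring
  have hpos : (0 : ℝ) < (1 / 2 - d) * l := by
    apply mul_pos (by linarith) (by exact_mod_cast hl)
  -- first show minVKCells R w = 0 is impossible given w ≠ 1, and ≥ 1 is impossible given hlen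
  have hm : minVKCells R w = 0 := by
    by_contra h0
    have h1 : (1 : ℝ) ≤ (minVKCells R w : ℝ) := by
      exact_mod_cast Nat.one_le_iff_ne_zero.2 h0
    rw [hc] at hbound
    nlinarith [hbound, hlen, h1, hpos]
  -- the defining set is nonempty, so sInf is attained
  have hne' : {m : ℕ | ∃ cs : List (FreeGroup (Fin k)), cs.length = m ∧
      (∀ c ∈ cs, ∃ r ∈ R, ∃ g : FreeGroup (Fin k), c = g * r * g⁻¹ ∨ c = g * r⁻¹ * g⁻¹) ∧
      cs.prod = w}.Nonempty := by
    obtain ⟨cs, h1, h2⟩ := minVKCells_set_nonempty R w hw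
    exact ⟨cs.length, cs, rfl, h1, h2⟩
  have := Nat.sInf_mem hne'
  rw [show sInf {m : ℕ | ∃ cs : List (FreeGroup (Fin k)), cs.length = m ∧
      (∀ c ∈ cs, ∃ r ∈ R, ∃ g : FreeGroup (Fin k), c = g * r * g⁻¹ ∨ c = g * r⁻¹ * g⁻¹) ∧
      cs.prod = w} = minVKCells R w from rfl, hm] at this
  obtain ⟨cs, hlen0, _, hprod⟩ := this
  rw [List.length_eq_zero_iff] at hlen0
  subst hlen0
  simp at hprod
  exact hne hprod.symm
end
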